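/- If D = λ·Id with λ > 0, the uniform probability distribution on the unit sphere S^{n-1} is the unique minimizer of the energy E(μ) = ∬ exp(λ⟪x, y⟫) dμ(x) dμ(y) over Borel probability measures on the sphere. -/

import Mathlib

open MeasureTheory RealInnerProductSpace ENNReal

/-- The uniform (normalized surface) probability measure on the unit sphere of `ℝ^n`,
viewed as a measure on the ambient space. -/
noncomputable def uniformSphere (n : ℕ) : Measure (EuclideanSpace ℝ (Fin n)) :=
  (((volume : Measure (EuclideanSpace ℝ (Fin n))).toSphere) Set.univ)⁻¹ •
    Measure.map Subtype.val ((volume : Measure (EuclideanSpace ℝ (Fin n))).toSphere)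

/-- The interaction energy for `D = λ·Id`. -/
noncomputable def energyId {n : ℕ} (lam : ℝ)
    (μ : Measure (EuclideanSpace ℝ (Fin n))) : ℝ :=
  ∫ x, ∫ y, Real.exp (lam * ⟪x, y⟫) ∂μ ∂μ

/-!
Expanding `exp (λ⟪x, y⟫) = ∑ₖ λᵏ/k! ⟪x, y⟫ᵏ` and `⟪x, y⟫ᵏ = ∑_α x^α y^α` (over multi-indices
`α : Fin k → Fin n`) writes the mutual energy of two measures on the sphere as
`∑ₖ λᵏ/k! ⟨mₖ(μ), mₖ(ν)⟩`, where `mₖ` is the vector of degree-`k` monomial moments. By rotation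
invariance of the uniform measure `σ`, the mutual energy of `σ` with any probability measure `ν` on
the sphere equals `E(σ)`, hence `E(ν) - E(σ) = ∑ₖ λᵏ/k! ‖mₖ(ν) - mₖ(σ)‖² ≥ 0`. Equality forces all
moments of `ν` and `σ` to agree, and a measure of bounded support is determined by its moments,
which determine its characteristic function through the same exponential series.
-/

open scoped Nat

theorem hasSum_integral_exp {𝕂 X : Type*} [RCLike 𝕂] [MeasurableSpace X] {P : Measure X}
    [IsFiniteMeasure P] {g : X → 𝕂} (hg : AEStronglyMeasurable g P) {C : ℝ}
    (hC : ∀ᵐ x ∂P, ‖g x‖ ≤ C) :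
    HasSum (fun k : ℕ => ∫ x, (k ! : 𝕂)⁻¹ * g x ^ k ∂P) (∫ x, NormedSpace.exp (g x) ∂P) := by
  refine hasSum_integral_of_dominated_convergence (fun k _ => C ^ k / k !)
    (fun k => (hg.pow k).const_mul _) (fun k => ?_)
    (.of_forall fun _ => Real.summable_pow_div_factorial C) (integrable_const _)
    (.of_forall fun x => by simpa using NormedSpace.exp_series_hasSum_exp' (𝕂 := 𝕂) (g x))
  filter_upwards [hC] with x hx
  rw [norm_mul, norm_pow, norm_inv, RCLike.norm_natCast, div_eq_inv_mul]
  gcongr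

section Moments

variable {n : ℕ}

noncomputable def monomialMoment (μ : Measure (EuclideanSpace ℝ (Fin n))) {k : ℕ}
    (α : Fin k → Fin n) : ℝ :=
  ∫ x, ∏ j, x (α j) ∂μ

theorem inner_pow_eq_sum_prod (x y : EuclideanSpace ℝ (Fin n)) (k : ℕ) :
    ⟪x, y⟫ ^ k = ∑ α : Fin k → Fin n, (∏ j, x (α j)) * ∏ j, y (α j) := by
  simp only [PiLp.inner_apply, RCLike.inner_apply, conj_trivial, Fintype.sum_pow,
    ← Finset.prod_mul_distrib, mul_comm]

theorem abs_prod_apply_le {x : EuclideanSpace ℝ (Fin n)} {R : ℝ} (hx : ‖x‖ ≤ R) {k : ℕ}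
    (α : Fin k → Fin n) : |∏ j, x (α j)| ≤ R ^ k := by
  calc |∏ j, x (α j)| = ∏ j, |x (α j)| := Finset.abs_prod _ _
    _ ≤ ∏ _j : Fin k, R := Finset.prod_le_prod (fun _ _ => abs_nonneg _) fun j _ =>
        (PiLp.norm_apply_le x (α j)).trans hx
    _ = R ^ k := by simp

variable {μ ν : Measure (EuclideanSpace ℝ (Fin n))} {R : ℝ}

theorem integrable_prod_apply [IsFiniteMeasure μ] (hμ : ∀ᵐ x ∂μ, ‖x‖ ≤ R) {k : ℕ}
    (α : Fin k → Fin n) : Integrable (fun x : EuclideanSpace ℝ (Fin n) => ∏ j, x (α j)) μ :=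
  .of_bound (by fun_prop) (R ^ k) (hμ.mono fun _ hx => abs_prod_apply_le hx α)

theorem integral_inner_pow [IsFiniteMeasure μ] (hμ : ∀ᵐ x ∂μ, ‖x‖ ≤ R)
    (t : EuclideanSpace ℝ (Fin n)) (k : ℕ) :
    ∫ x, ⟪x, t⟫ ^ k ∂μ = ∑ α : Fin k → Fin n, monomialMoment μ α * ∏ j, t (α j) := by
  simp_rw [inner_pow_eq_sum_prod]
  rw [integral_finsetSum _ fun α _ => (integrable_prod_apply hμ α).mul_const _]
  simp_rw [integral_mul_const, monomialMoment]

theorem integral_prod_inner_pow [IsFiniteMeasure μ] [IsFiniteMeasure ν]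
    (hμ : ∀ᵐ x ∂μ, ‖x‖ ≤ R) (hν : ∀ᵐ y ∂ν, ‖y‖ ≤ R) (k : ℕ) :
    ∫ z, ⟪z.1, z.2⟫ ^ k ∂(μ.prod ν) =
      ∑ α : Fin k → Fin n, monomialMoment μ α * monomialMoment ν α := by
  simp_rw [inner_pow_eq_sum_prod]
  rw [integral_finsetSum _ fun α _ =>
    (integrable_prod_apply hμ α).mul_prod (integrable_prod_apply hν α)]
  exact Finset.sum_congr rfl fun α _ =>
    integral_prod_mul (fun x : EuclideanSpace ℝ (Fin n) => ∏ j, x (α j))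
      (fun y : EuclideanSpace ℝ (Fin n) => ∏ j, y (α j))

end Moments

section Determinacy

open Complex

variable {n : ℕ} {μ ν : Measure (EuclideanSpace ℝ (Fin n))} {R : ℝ}

theorem hasSum_charFun [IsFiniteMeasure μ] (hμ : ∀ᵐ x ∂μ, ‖x‖ ≤ R)
    (t : EuclideanSpace ℝ (Fin n)) :
    HasSum (fun k : ℕ => (k ! : ℂ)⁻¹ * I ^ k *
        ↑(∑ α : Fin k → Fin n, monomialMoment μ α * ∏ j, t (α j)))
      (charFun μ t) := by
  have hterm (k : ℕ) : ∫ x, (k ! : ℂ)⁻¹ * (⟪x, t⟫ * I) ^ k ∂μ =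
      (k ! : ℂ)⁻¹ * I ^ k * ↑(∑ α : Fin k → Fin n, monomialMoment μ α * ∏ j, t (α j)) := by
    simp_rw [mul_pow, ← mul_assoc, integral_mul_const, integral_const_mul, ← Complex.ofReal_pow]
    rw [integral_complex_ofReal, integral_inner_pow hμ]
    ring
  have h := hasSum_integral_exp (g := fun x => (⟪x, t⟫ : ℂ) * I) (by fun_prop) (C := R * ‖t‖) <|
    hμ.mono fun x hx => by
      rw [norm_mul, norm_I, mul_one, norm_real, Real.norm_eq_abs]
      exact (abs_real_inner_le_norm x t).trans (by gcongr)
  rw [charFun, exp_eq_exp_ℂ]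
  simpa only [hterm] using h

theorem MeasureTheory.Measure.ext_of_monomialMoment_eq [IsFiniteMeasure μ] [IsFiniteMeasure ν]
    (hμ : ∀ᵐ x ∂μ, ‖x‖ ≤ R) (hν : ∀ᵐ x ∂ν, ‖x‖ ≤ R)
    (h : ∀ (k : ℕ) (α : Fin k → Fin n), monomialMoment μ α = monomialMoment ν α) : μ = ν :=
  Measure.ext_of_charFun <| funext fun t =>
    (hasSum_charFun hμ t).unique (by simpa only [h] using hasSum_charFun hν t)

end Determinacy

noncomputable def mutualEnergy {E : Type*} [NormedAddCommGroup E] [InnerProductSpace ℝ E]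
    [MeasurableSpace E] (lam : ℝ) (μ ν : Measure E) : ℝ :=
  ∫ x, ∫ y, Real.exp (lam * ⟪x, y⟫) ∂ν ∂μ

theorem energyId_eq_mutualEnergy {n : ℕ} (lam : ℝ) (μ : Measure (EuclideanSpace ℝ (Fin n))) :
    energyId lam μ = mutualEnergy lam μ μ :=
  rfl

section ExpansionInMoments

variable {n : ℕ} {μ ν : Measure (EuclideanSpace ℝ (Fin n))} {R : ℝ}

theorem ae_abs_inner_le_prod (hμ : ∀ᵐ x ∂μ, ‖x‖ ≤ R) (hν : ∀ᵐ y ∂ν, ‖y‖ ≤ R) :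
    ∀ᵐ z ∂(μ.prod ν), |⟪z.1, z.2⟫| ≤ R ^ 2 := by
  filter_upwards [Measure.quasiMeasurePreserving_fst.ae hμ,
    Measure.quasiMeasurePreserving_snd.ae hν] with z hz₁ hz₂
  calc |⟪z.1, z.2⟫| ≤ ‖z.1‖ * ‖z.2‖ := abs_real_inner_le_norm _ _
    _ ≤ R * R := mul_le_mul hz₁ hz₂ (norm_nonneg _) ((norm_nonneg _).trans hz₁)
    _ = R ^ 2 := (sq R).symm

theorem mutualEnergy_eq_integral_prod [IsFiniteMeasure μ] [IsFiniteMeasure ν] (lam : ℝ)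
    (hμ : ∀ᵐ x ∂μ, ‖x‖ ≤ R) (hν : ∀ᵐ y ∂ν, ‖y‖ ≤ R) :
    mutualEnergy lam μ ν = ∫ z, Real.exp (lam * ⟪z.1, z.2⟫) ∂(μ.prod ν) := by
  refine (integral_prod (fun z => Real.exp (lam * ⟪z.1, z.2⟫))
    (.of_bound (by fun_prop) (Real.exp (|lam| * R ^ 2)) ?_)).symm
  filter_upwards [ae_abs_inner_le_prod hμ hν] with z hz
  rw [Real.norm_eq_abs, Real.abs_exp, Real.exp_le_exp]
  calc lam * ⟪z.1, z.2⟫ ≤ |lam| * |⟪z.1, z.2⟫| := by rw [← abs_mul]; exact le_abs_self _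
    _ ≤ |lam| * R ^ 2 := by gcongr

theorem hasSum_mutualEnergy [IsFiniteMeasure μ] [IsFiniteMeasure ν] (lam : ℝ)
    (hμ : ∀ᵐ x ∂μ, ‖x‖ ≤ R) (hν : ∀ᵐ y ∂ν, ‖y‖ ≤ R) :
    HasSum (fun k : ℕ => lam ^ k / k ! *
        ∑ α : Fin k → Fin n, monomialMoment μ α * monomialMoment ν α)
      (mutualEnergy lam μ ν) := by
  have hterm (k : ℕ) : ∫ z, (k ! : ℝ)⁻¹ * (lam * ⟪z.1, z.2⟫) ^ k ∂(μ.prod ν) =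
      lam ^ k / k ! * ∑ α : Fin k → Fin n, monomialMoment μ α * monomialMoment ν α := by
    simp_rw [mul_pow, ← mul_assoc, integral_const_mul, integral_prod_inner_pow hμ hν]
    ring
  have h := hasSum_integral_exp (g := fun z : EuclideanSpace ℝ (Fin n) × _ => lam * ⟪z.1, z.2⟫)
    (by fun_prop) (C := |lam| * R ^ 2) <| (ae_abs_inner_le_prod hμ hν).mono fun z hz => by
      rw [Real.norm_eq_abs, abs_mul]; gcongr
  rw [mutualEnergy_eq_integral_prod lam hμ hν, Real.exp_eq_exp_ℝ]
  simpa only [hterm] using h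

theorem hasSum_mutualEnergy_sub_sq [IsFiniteMeasure μ] [IsFiniteMeasure ν] (lam : ℝ)
    (hμ : ∀ᵐ x ∂μ, ‖x‖ ≤ R) (hν : ∀ᵐ y ∂ν, ‖y‖ ≤ R) :
    HasSum (fun k : ℕ => lam ^ k / k ! *
        ∑ α : Fin k → Fin n, (monomialMoment μ α - monomialMoment ν α) ^ 2)
      (mutualEnergy lam μ μ - 2 * mutualEnergy lam μ ν + mutualEnergy lam ν ν) := by
  have hterm (k : ℕ) : lam ^ k / k ! *
      ∑ α : Fin k → Fin n, (monomialMoment μ α - monomialMoment ν α) ^ 2 =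
        lam ^ k / k ! * ∑ α : Fin k → Fin n, monomialMoment μ α * monomialMoment μ α -
        2 * (lam ^ k / k ! * ∑ α : Fin k → Fin n, monomialMoment μ α * monomialMoment ν α) +
        lam ^ k / k ! * ∑ α : Fin k → Fin n, monomialMoment ν α * monomialMoment ν α := by
    simp only [Finset.mul_sum, ← Finset.sum_sub_distrib, ← Finset.sum_add_distrib]
    exact Finset.sum_congr rfl fun _ _ => by ring
  simpa only [hterm] using ((hasSum_mutualEnergy lam hμ hμ).sub
    ((hasSum_mutualEnergy lam hμ hν).mul_left 2)).add (hasSum_mutualEnergy lam hν hν)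

end ExpansionInMoments

section IsometryInvariance

open Set Metric
open scoped Pointwise

variable {E : Type*} [NormedAddCommGroup E] [InnerProductSpace ℝ E]

theorem LinearIsometryEquiv.preimage_set_smul (R : E ≃ₗᵢ[ℝ] E) (t : Set ℝ) (s : Set E) :
    R ⁻¹' (t • s) = t • R ⁻¹' s := by
  ext x
  constructor
  · rintro ⟨a, ha, y, hy, hxy⟩
    refine ⟨a, ha, R.symm y, by simpa using hy, R.injective ?_⟩
    simpa using hxy
  · rintro ⟨a, ha, y, hy, rfl⟩
    exact ⟨a, ha, R y, hy, by simp⟩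

variable [MeasurableSpace E] [BorelSpace E]

theorem map_subtypeVal_toSphere_apply (μ : Measure E) {s : Set E} (hs : MeasurableSet s) :
    μ.toSphere.map Subtype.val s = Module.finrank ℝ E * μ (Ioo (0 : ℝ) 1 • (s ∩ sphere 0 1)) := by
  rw [Measure.map_apply measurable_subtype_coe hs,
    Measure.toSphere_apply' _ (measurable_subtype_coe hs), Subtype.image_preimage_coe,
    inter_comm]

theorem map_linearIsometryEquiv_map_toSphere {μ : Measure E} (R : E ≃ₗᵢ[ℝ] E)
    (hR : MeasurePreserving R μ μ) :
    (μ.toSphere.map Subtype.val).map R = μ.toSphere.map Subtype.val := by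
  ext s hs
  have hRs : MeasurableSet (R ⁻¹' s) := R.continuous.measurable hs
  have hS : R ⁻¹' sphere 0 1 = sphere 0 1 := by simp [R.preimage_sphere]
  rw [Measure.map_apply R.continuous.measurable hs, map_subtypeVal_toSphere_apply μ hRs,
    map_subtypeVal_toSphere_apply μ hs, ← hS, ← preimage_inter, ← R.preimage_set_smul, hS,
    hR.measure_preimage_emb R.toHomeomorph.measurableEmbedding]

theorem integral_comp_inner_eq_of_norm_eq {ρ : Measure E}
    (hρ : ∀ R : E ≃ₗᵢ[ℝ] E, ρ.map R = ρ) {G : Type*} [NormedAddCommGroup G]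
    [NormedSpace ℝ G] (f : ℝ → G) {x x' : E} (h : ‖x‖ = ‖x'‖) :
    ∫ y, f ⟪x, y⟫ ∂ρ = ∫ y, f ⟪x', y⟫ ∂ρ := by
  set R : E ≃ₗᵢ[ℝ] E := (ℝ ∙ (x - x'))ᗮ.reflection
  have hRx : R x = x' := Submodule.reflection_sub h
  calc ∫ y, f ⟪x, y⟫ ∂ρ = ∫ y, f ⟪R x, R y⟫ ∂ρ := by simp_rw [LinearIsometryEquiv.inner_map_map]
    _ = ∫ y, f ⟪x', y⟫ ∂(ρ.map R) := by
      rw [hRx]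
      exact (integral_map_equiv R.toHomeomorph.toMeasurableEquiv fun y => f ⟪x', y⟫).symm
    _ = ∫ y, f ⟪x', y⟫ ∂ρ := by rw [hρ]

theorem mutualEnergy_eq_of_norm_ae_eq (lam : ℝ) {ρ : Measure E}
    (hρ : ∀ R : E ≃ₗᵢ[ℝ] E, ρ.map R = ρ) {μ ν : Measure E} [IsProbabilityMeasure μ]
    [IsProbabilityMeasure ν] {r : ℝ} (hμ : ∀ᵐ x ∂μ, ‖x‖ = r) (hν : ∀ᵐ x ∂ν, ‖x‖ = r) :
    mutualEnergy lam μ ρ = mutualEnergy lam ν ρ := by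
  obtain ⟨x₀, hx₀⟩ := hμ.exists
  have key (μ' : Measure E) [IsProbabilityMeasure μ'] (h : ∀ᵐ x ∂μ', ‖x‖ = r) :
      mutualEnergy lam μ' ρ = ∫ y, Real.exp (lam * ⟪x₀, y⟫) ∂ρ := by
    rw [mutualEnergy, integral_congr_ae (h.mono fun x hx => integral_comp_inner_eq_of_norm_eq hρ
      (fun t => Real.exp (lam * t)) (hx.trans hx₀.symm)), integral_const, probReal_univ, one_smul]
  rw [key μ hμ, key ν hν]

end IsometryInvariance

section UniformSphere

open Set Metric

variable {n : ℕ}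

theorem uniformSphere_apply {s : Set (EuclideanSpace ℝ (Fin n))} (hs : MeasurableSet s) :
    uniformSphere n s = ((volume : Measure (EuclideanSpace ℝ (Fin n))).toSphere univ)⁻¹ *
      (volume : Measure (EuclideanSpace ℝ (Fin n))).toSphere (Subtype.val ⁻¹' s) := by
  rw [uniformSphere, Measure.smul_apply, Measure.map_apply measurable_subtype_coe hs, smul_eq_mul]

theorem uniformSphere_apply_of_sphere_subset (hn : 1 ≤ n) {s : Set (EuclideanSpace ℝ (Fin n))}
    (hs : MeasurableSet s) (hsub : sphere 0 1 ⊆ s) : uniformSphere n s = 1 := by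
  have : NeZero n := ⟨by omega⟩
  rw [uniformSphere_apply hs, preimage_eq_univ_iff.mpr (by rwa [Subtype.range_coe]),
    ENNReal.inv_mul_cancel (Measure.measure_univ_ne_zero.mpr (Measure.toSphere_ne_zero _))
      (measure_ne_top _ _)]

theorem isProbabilityMeasure_uniformSphere (hn : 1 ≤ n) :
    IsProbabilityMeasure (uniformSphere n) :=
  ⟨uniformSphere_apply_of_sphere_subset hn .univ (subset_univ _)⟩

theorem uniformSphere_sphere (hn : 1 ≤ n) : uniformSphere n (sphere 0 1) = 1 :=
  uniformSphere_apply_of_sphere_subset hn isClosed_sphere.measurableSet subset_rfl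

theorem map_uniformSphere (R : EuclideanSpace ℝ (Fin n) ≃ₗᵢ[ℝ] EuclideanSpace ℝ (Fin n)) :
    (uniformSphere n).map R = uniformSphere n := by
  rw [uniformSphere, Measure.map_smul, map_linearIsometryEquiv_map_toSphere R R.measurePreserving]

end UniformSphere

section EnergyOnSphere

open Metric

variable {n : ℕ}

theorem ae_norm_eq_one_of_measure_sphere {μ : Measure (EuclideanSpace ℝ (Fin n))}
    [IsProbabilityMeasure μ] (hμ : μ (sphere 0 1) = 1) : ∀ᵐ x ∂μ, ‖x‖ = 1 := by
  have h := (ae_mem_iff_measure_eq isClosed_sphere.measurableSet.nullMeasurableSet).mpr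
    (hμ.trans measure_univ.symm)
  simpa only [mem_sphere_zero_iff_norm] using h

theorem hasSum_energyId_sub_energyId_uniformSphere (hn : 1 ≤ n) (lam : ℝ)
    {ν : Measure (EuclideanSpace ℝ (Fin n))} [IsProbabilityMeasure ν] (hν : ν (sphere 0 1) = 1) :
    HasSum (fun k : ℕ => lam ^ k / k ! *
        ∑ α : Fin k → Fin n, (monomialMoment ν α - monomialMoment (uniformSphere n) α) ^ 2)
      (energyId lam ν - energyId lam (uniformSphere n)) := by
  have := isProbabilityMeasure_uniformSphere hn
  have hν₁ := ae_norm_eq_one_of_measure_sphere hν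
  have hu₁ := ae_norm_eq_one_of_measure_sphere (uniformSphere_sphere hn)
  have hcross : mutualEnergy lam ν (uniformSphere n) =
      mutualEnergy lam (uniformSphere n) (uniformSphere n) :=
    mutualEnergy_eq_of_norm_ae_eq lam map_uniformSphere hν₁ hu₁
  have h := hasSum_mutualEnergy_sub_sq lam (hν₁.mono fun _ hx => hx.le)
    (hu₁.mono fun _ hx => hx.le)
  rw [hcross, show ∀ a b : ℝ, a - 2 * b + b = a - b by intros; ring] at h
  rwa [energyId_eq_mutualEnergy, energyId_eq_mutualEnergy]

theorem energyId_uniformSphere_le (hn : 1 ≤ n) {lam : ℝ} (hlam : 0 ≤ lam)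
    {ν : Measure (EuclideanSpace ℝ (Fin n))} [IsProbabilityMeasure ν] (hν : ν (sphere 0 1) = 1) :
    energyId lam (uniformSphere n) ≤ energyId lam ν :=
  sub_nonneg.mp <| (hasSum_energyId_sub_energyId_uniformSphere hn lam hν).nonneg
    fun _ => by positivity

theorem monomialMoment_eq_of_energyId_le (hn : 1 ≤ n) {lam : ℝ} (hlam : 0 < lam)
    {ν : Measure (EuclideanSpace ℝ (Fin n))} [IsProbabilityMeasure ν] (hν : ν (sphere 0 1) = 1)
    (hmin : energyId lam ν ≤ energyId lam (uniformSphere n)) {k : ℕ} (α : Fin k → Fin n) :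
    monomialMoment ν α = monomialMoment (uniformSphere n) α := by
  have h := hasSum_energyId_sub_energyId_uniformSphere hn lam hν
  rw [le_antisymm (sub_nonpos.mpr hmin) (h.nonneg fun _ => by positivity)] at h
  have hk := congrFun ((hasSum_zero_iff_of_nonneg fun _ => by positivity).mp h) k
  have hsq := (Finset.sum_eq_zero_iff_of_nonneg fun α _ => sq_nonneg _).mp
    ((mul_eq_zero.mp hk).resolve_left (by positivity)) α (Finset.mem_univ α)
  exact sub_eq_zero.mp (pow_eq_zero_iff two_ne_zero |>.mp hsq)

end EnergyOnSphere

theorem stmt11 {n : ℕ} (hn : 1 ≤ n) (lam : ℝ) (hlam : 0 < lam) :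
    (IsProbabilityMeasure (uniformSphere n) ∧
      uniformSphere n (Metric.sphere (0 : EuclideanSpace ℝ (Fin n)) 1) = 1 ∧
      ∀ ν : Measure (EuclideanSpace ℝ (Fin n)), IsProbabilityMeasure ν →
        ν (Metric.sphere (0 : EuclideanSpace ℝ (Fin n)) 1) = 1 →
        energyId lam (uniformSphere n) ≤ energyId lam ν) ∧
    (∀ μ : Measure (EuclideanSpace ℝ (Fin n)), IsProbabilityMeasure μ →
      μ (Metric.sphere (0 : EuclideanSpace ℝ (Fin n)) 1) = 1 →
      (∀ ν : Measure (EuclideanSpace ℝ (Fin n)), IsProbabilityMeasure ν →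
        ν (Metric.sphere (0 : EuclideanSpace ℝ (Fin n)) 1) = 1 →
        energyId lam μ ≤ energyId lam ν) →
      μ = uniformSphere n) := by
  have hu := isProbabilityMeasure_uniformSphere hn
  refine ⟨⟨hu, uniformSphere_sphere hn, fun ν _ hν => energyId_uniformSphere_le hn hlam.le hν⟩,
    fun μ _ hμ hmin => ?_⟩
  have hmin_u := hmin _ hu (uniformSphere_sphere hn)
  exact Measure.ext_of_monomialMoment_eq (R := 1)
    ((ae_norm_eq_one_of_measure_sphere hμ).mono fun _ hx => hx.le)
    ((ae_norm_eq_one_of_measure_sphere (uniformSphere_sphere hn)).mono fun _ hx => hx.le)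
    fun k α => monomialMoment_eq_of_energyId_le hn hlam hμ hmin_u α
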